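/- Let C be a function from pairs of binary trees to the nonnegative reals satisfying C(leaf, h) = 0 and C(h, leaf) = 0 for all trees h, and for all internal trees h₁ = node(l₁, d₁, r₁) and h₂ = node(l₂, d₂, r₂): C(h₁, h₂) ≤ 1 + max( ½·C(l₂, h₁) + ½·C(r₂, h₁), ½·C(l₁, h₂) + ½·C(r₁, h₂) ). (This is the expected-cost recurrence of the meld operation of randomised meldable heaps, where the comparison of root labels is treated as a nondeterministic choice and each recursive call costs 1; meld recurses with probability ½ into the left child and with probability ½ into the right child of the heap with smaller root.) Then for all binary trees h₁, h₂: C(h₁, h₂) ≤ log₂(|h₁|) + log₂(|h₂|). -/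
import Mathlib

/-- Binary trees with data elements of type `α` at internal nodes. -/
inductive BTree (α : Type) : Type
  | leaf : BTree α
  | node : BTree α → α → BTree α → BTree α

/-- The size of a tree is its number of leaves. -/
def BTree.size {α : Type} : BTree α → ℕ
  | .leaf => 1
  | .node l _ r => l.size + r.size

lemma BTree.size_pos' {α : Type} (t : BTree α) : 1 ≤ t.size := by
  induction t with
  | leaf => simp [BTree.size]
  | node l d r ihl ihr => simp [BTree.size]; omega

lemma key_log (a b : ℕ) (ha : 1 ≤ a) (hb : 1 ≤ b) :
    1 + ((1/2 : ℝ) * Real.logb 2 a + (1/2) * Real.logb 2 b) ≤ Real.logb 2 ((a : ℝ) + b) := by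
  have hA : (1:ℝ) ≤ a := by exact_mod_cast ha
  have hB : (1:ℝ) ≤ b := by exact_mod_cast hb
  have hA0 : (0:ℝ) < a := by linarith
  have hB0 : (0:ℝ) < b := by linarith
  have hmul : Real.logb 2 a + Real.logb 2 b = Real.logb 2 ((a:ℝ)*b) := by
    rw [Real.logb_mul (ne_of_gt hA0) (ne_of_gt hB0)]
  have hAM : 4 * ((a:ℝ)*b) ≤ ((a:ℝ)+b)^2 := by nlinarith [sq_nonneg ((a:ℝ) - b)]
  have h4 : Real.logb 2 (4 * ((a:ℝ)*b)) ≤ Real.logb 2 (((a:ℝ)+b)^2) :=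
    Real.logb_le_logb_of_le one_lt_two (by positivity) hAM
  rw [Real.logb_mul (by norm_num) (by positivity), Real.logb_pow] at h4
  have h44 : Real.logb 2 4 = 2 := by
    have : (4:ℝ) = 2 ^ (2:ℕ) := by norm_num
    rw [this, Real.logb_pow, Real.logb_self_eq_one (by norm_num)]; norm_num
  rw [h44] at h4
  push_cast at h4
  linarith

/-- If `C` is a nonnegative real-valued function on pairs of binary trees with
`C leaf h = 0`, `C h leaf = 0` and, for internal trees `h₁ = node l₁ d₁ r₁` and
`h₂ = node l₂ d₂ r₂`,
`C h₁ h₂ ≤ 1 + max (½·C l₂ h₁ + ½·C r₂ h₁) (½·C l₁ h₂ + ½·C r₁ h₂)`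
(the expected-cost recurrence of `meld` for randomised meldable heaps), then
`C h₁ h₂ ≤ log₂ |h₁| + log₂ |h₂|` for all trees `h₁ h₂`. -/
theorem meld_expected_cost_le_log {α : Type} (C : BTree α → BTree α → ℝ)
    (hC0 : ∀ h₁ h₂ : BTree α, 0 ≤ C h₁ h₂)
    (hleafL : ∀ h : BTree α, C BTree.leaf h = 0)
    (hleafR : ∀ h : BTree α, C h BTree.leaf = 0)
    (hrec : ∀ (l₁ : BTree α) (d₁ : α) (r₁ : BTree α) (l₂ : BTree α) (d₂ : α) (r₂ : BTree α),
      C (BTree.node l₁ d₁ r₁) (BTree.node l₂ d₂ r₂) ≤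
        1 + max ((1 / 2) * C l₂ (BTree.node l₁ d₁ r₁) + (1 / 2) * C r₂ (BTree.node l₁ d₁ r₁))
                ((1 / 2) * C l₁ (BTree.node l₂ d₂ r₂) + (1 / 2) * C r₁ (BTree.node l₂ d₂ r₂))) :
    ∀ h₁ h₂ : BTree α,
      C h₁ h₂ ≤ Real.logb 2 (h₁.size : ℝ) + Real.logb 2 (h₂.size : ℝ) := by
  have logb_nonneg : ∀ t : BTree α, 0 ≤ Real.logb 2 (t.size : ℝ) := by
    intro t
    apply Real.logb_nonneg one_lt_two
    exact_mod_cast t.size_pos'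
  have main : ∀ n : ℕ, ∀ h₁ h₂ : BTree α, h₁.size + h₂.size ≤ n →
      C h₁ h₂ ≤ Real.logb 2 (h₁.size : ℝ) + Real.logb 2 (h₂.size : ℝ) := by
    intro n
    induction n with
    | zero => intro h₁ h₂ hn; have := h₁.size_pos'; have := h₂.size_pos'; omega
    | succ n ih =>
      intro h₁ h₂ hn
      cases h₁ with
      | leaf =>
          rw [hleafL]
          exact add_nonneg (logb_nonneg _) (logb_nonneg _)
      | node l₁ d₁ r₁ =>
        cases h₂ with
        | leaf =>
            rw [hleafR]
            exact add_nonneg (logb_nonneg _) (logb_nonneg _)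
        | node l₂ d₂ r₂ =>
          set H₁ := BTree.node l₁ d₁ r₁ with hH₁
          set H₂ := BTree.node l₂ d₂ r₂ with hH₂
          have hs₁ : H₁.size = l₁.size + r₁.size := rfl
          have hs₂ : H₂.size = l₂.size + r₂.size := rfl
          have pl₁ := l₁.size_pos'; have pr₁ := r₁.size_pos'
          have pl₂ := l₂.size_pos'; have pr₂ := r₂.size_pos'
          have b1 : C l₂ H₁ ≤ Real.logb 2 (l₂.size : ℝ) + Real.logb 2 (H₁.size : ℝ) :=
            ih _ _ (by omega)
          have b2 : C r₂ H₁ ≤ Real.logb 2 (r₂.size : ℝ) + Real.logb 2 (H₁.size : ℝ) :=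
            ih _ _ (by omega)
          have b3 : C l₁ H₂ ≤ Real.logb 2 (l₁.size : ℝ) + Real.logb 2 (H₂.size : ℝ) :=
            ih _ _ (by omega)
          have b4 : C r₁ H₂ ≤ Real.logb 2 (r₁.size : ℝ) + Real.logb 2 (H₂.size : ℝ) :=
            ih _ _ (by omega)
          have k₂ : 1 + ((1/2 : ℝ) * Real.logb 2 (l₂.size : ℝ) +
              (1/2) * Real.logb 2 (r₂.size : ℝ)) ≤ Real.logb 2 (H₂.size : ℝ) := by
            have := key_log l₂.size r₂.size pl₂ pr₂
            rw [hs₂]; push_cast; push_cast at this; linarith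
          have k₁ : 1 + ((1/2 : ℝ) * Real.logb 2 (l₁.size : ℝ) +
              (1/2) * Real.logb 2 (r₁.size : ℝ)) ≤ Real.logb 2 (H₁.size : ℝ) := by
            have := key_log l₁.size r₁.size pl₁ pr₁
            rw [hs₁]; push_cast; push_cast at this; linarith
          refine (hrec l₁ d₁ r₁ l₂ d₂ r₂).trans ?_
          rw [← hH₁, ← hH₂]
          have m1 : (1:ℝ) + ((1 / 2) * C l₂ H₁ + (1 / 2) * C r₂ H₁) ≤
              Real.logb 2 (H₁.size : ℝ) + Real.logb 2 (H₂.size : ℝ) := by linarith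
          have m2 : (1:ℝ) + ((1 / 2) * C l₁ H₂ + (1 / 2) * C r₁ H₂) ≤
              Real.logb 2 (H₁.size : ℝ) + Real.logb 2 (H₂.size : ℝ) := by linarith
          have hmax : ((1:ℝ) / 2 * C l₂ H₁ + 1 / 2 * C r₂ H₁) ⊔
              (1 / 2 * C l₁ H₂ + 1 / 2 * C r₁ H₂) ≤
              Real.logb 2 (H₁.size : ℝ) + Real.logb 2 (H₂.size : ℝ) - 1 :=
            max_le (by linarith) (by linarith)
          linarith
  intro h₁ h₂
  exact main (h₁.size + h₂.size) h₁ h₂ le_rfl
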